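/- In the two-asset Merton jump-diffusion model with discretization parameter h (Δx = C₁h, Δy = C₂h, Δτ = C₃h for fixed constants C₁, C₂, C₃ > 0), there exist constants C > 0 and h₀ > 0, independent of h, such that for every h ∈ (0, h₀), every choice of grid centers x̂₀, ŷ₀ ∈ ℝ, all integers N, J ≥ 2 with 2NΔx ≥ C₁'/h and 2JΔy ≥ C₂'/h (C₁', C₂' > 0 fixed), and every interior index pair (n, j) with |n| ≤ N/2 − 1 and |j| ≤ J/2 − 1, the composite trapezoidal quadrature of the Green's function satisfies Δx Δy Σ_{l=−N}^{N} Σ_{d=−J}^{J} φ_{l,d} g(x_{n−l}, y_{j−d}, Δτ) ≤ e^{−rΔτ} + C h². In particular, for sufficiently small h this sum is at most 1 + (Ch)(Δτ/T) ≤ exp((Ch)Δτ/T) for any fixed horizon T > 0, and the same bounds hold with g replaced by any partial sum of its (termwise nonnegative) series representation. -/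

import Mathlib

set_option maxHeartbeats 1000000


open MeasureTheory Matrix
open scoped BigOperators

noncomputable section

/-- The diffusion covariance matrix `C̃`. -/
def covMat (σx σy ρ : ℝ) : Matrix (Fin 2) (Fin 2) ℝ :=
  !![σx ^ 2, ρ * σx * σy; ρ * σx * σy, σy ^ 2]

/-- The drift vector `β̃`. -/
def driftVec (r lam σx σy κx κy : ℝ) : Fin 2 → ℝ :=
  ![r - lam * κx - σx ^ 2 / 2, r - lam * κy - σy ^ 2 / 2]

/-- The jump covariance matrix `C_M`. -/
def jumpCov (σtx σty ρh : ℝ) : Matrix (Fin 2) (Fin 2) ℝ :=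
  !![σtx ^ 2, ρh * σtx * σty; ρh * σtx * σty, σty ^ 2]

/-- The `k`-th closed-form term of the Merton Green's-function series. -/
def mertonTerm (lam Δτ : ℝ) (C CM : Matrix (Fin 2) (Fin 2) ℝ) (β μ z : Fin 2 → ℝ) (θ : ℝ)
    (k : ℕ) : ℝ :=
  (lam * Δτ) ^ k / (k.factorial : ℝ) *
    Real.exp (θ - 1 / 2 *
      ((β + z + (k : ℝ) • μ) ⬝ᵥ ((C + (k : ℝ) • CM)⁻¹).mulVec (β + z + (k : ℝ) • μ))) /
    (2 * Real.pi * Real.sqrt (C + (k : ℝ) • CM).det)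

/-- The Merton Green's function (termwise nonnegative series representation). -/
def mertonGreen (r lam σx σy ρ κx κy : ℝ) (CM : Matrix (Fin 2) (Fin 2) ℝ) (μ : Fin 2 → ℝ)
    (Δτ : ℝ) (z : Fin 2 → ℝ) : ℝ :=
  ∑' k : ℕ,
    mertonTerm lam Δτ (Δτ • covMat σx σy ρ) CM (Δτ • driftVec r lam σx σy κx κy) μ z
      (-(r + lam) * Δτ) k

/-- A partial sum of the Merton Green's-function series. -/
def mertonGreenPartial (r lam σx σy ρ κx κy : ℝ) (CM : Matrix (Fin 2) (Fin 2) ℝ)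
    (μ : Fin 2 → ℝ) (Δτ : ℝ) (K : ℕ) (z : Fin 2 → ℝ) : ℝ :=
  ∑ k ∈ Finset.range (K + 1),
    mertonTerm lam Δτ (Δτ • covMat σx σy ρ) CM (Δτ • driftVec r lam σx σy κx κy) μ z
      (-(r + lam) * Δτ) k

/-- Composite trapezoidal weight: `½` at the endpoints `|l| = N`, `1` otherwise. -/
def trapWeight (N : ℕ) (l : ℤ) : ℝ := if l.natAbs = N then 1 / 2 else 1

/-- The composite trapezoidal quadrature
`Δx Δy Σ_{l=−N}^{N} Σ_{d=−J}^{J} φ_{l,d} gker((n−l)Δx, (j−d)Δy)`. -/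
def quadSum (Δx Δy : ℝ) (N J : ℕ) (n j : ℤ) (gker : (Fin 2 → ℝ) → ℝ) : ℝ :=
  Δx * Δy *
    ∑ l ∈ Finset.Icc (-(N : ℤ)) (N : ℤ), ∑ d ∈ Finset.Icc (-(J : ℤ)) (J : ℤ),
      trapWeight N l * trapWeight J d *
        gker ![((n - l : ℤ) : ℝ) * Δx, ((j - d : ℤ) : ℝ) * Δy]

-- Auxiliary lemmas
lemma exp_neg_sq_le_geo {c : ℝ} (hc : 0 < c) (n : ℕ) :
    Real.exp (-(c * ((n : ℝ) + 1) ^ 2)) ≤ Real.exp (-c) * Real.exp (-c) ^ n := by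
  rw [← Real.exp_nat_mul, ← Real.exp_add]
  apply Real.exp_le_exp.2
  have h0 : (0:ℝ) ≤ (n:ℝ) := Nat.cast_nonneg n
  nlinarith [mul_nonneg (mul_nonneg hc.le h0) h0]

lemma summable_geo_exp {c : ℝ} (hc : 0 < c) :
    Summable fun n : ℕ => Real.exp (-c) * Real.exp (-c) ^ n := by
  apply Summable.mul_left
  exact summable_geometric_of_lt_one (Real.exp_pos _).le
    (Real.exp_lt_one_iff.2 (by linarith))

lemma summable_exp_nat_shift {c : ℝ} (hc : 0 < c) :
    Summable fun n : ℕ => Real.exp (-(c * ((n : ℝ) + 1) ^ 2)) :=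
  Summable.of_nonneg_of_le (fun _ => (Real.exp_pos _).le)
    (fun n => exp_neg_sq_le_geo hc n) (summable_geo_exp hc)

lemma summable_exp_nat_sq {c : ℝ} (hc : 0 < c) :
    Summable fun n : ℕ => Real.exp (-(c * (n : ℝ) ^ 2)) := by
  rw [← summable_nat_add_iff 1]
  apply (summable_exp_nat_shift hc).congr
  intro n; push_cast; ring_nf

lemma summable_exp_neg_int_sq {c : ℝ} (hc : 0 < c) :
    Summable fun n : ℤ => Real.exp (-(c * (n : ℝ) ^ 2)) := by
  apply Summable.of_nat_of_neg_add_one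
  · exact (summable_exp_nat_sq hc).congr fun n => by norm_num
  · exact (summable_exp_nat_shift hc).congr fun n => by push_cast; ring_nf

lemma tsum_exp_neg_int_sq_le {c : ℝ} (hc : 1 ≤ c) :
    ∑' n : ℤ, Real.exp (-(c * (n : ℝ) ^ 2)) ≤ 1 + 4 * Real.exp (-c) := by
  have hc0 : (0:ℝ) < c := by linarith
  have h1 : Summable fun n : ℕ => Real.exp (-(c * ((n:ℤ) : ℝ) ^ 2)) :=
    (summable_exp_nat_sq hc0).congr fun n => by norm_num
  have h2 : Summable fun n : ℕ => Real.exp (-(c * ((((-(n+1)) : ℤ)) : ℝ) ^ 2)) :=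
    (summable_exp_nat_shift hc0).congr fun n => by push_cast; ring_nf
  rw [tsum_of_nat_of_neg_add_one (f := fun n : ℤ => Real.exp (-(c * (n:ℝ)^2))) h1 h2]
  have e1 : (∑' n : ℕ, Real.exp (-(c * ((n:ℤ) : ℝ) ^ 2)))
      = 1 + ∑' n : ℕ, Real.exp (-(c * ((n:ℝ)+1) ^ 2)) := by
    rw [Summable.tsum_eq_zero_add h1]
    have : Real.exp (-(c * (((0:ℕ):ℤ) : ℝ) ^ 2)) = 1 := by norm_num
    rw [this]
    congr 1
    exact tsum_congr fun n => by push_cast; ring_nf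
  have e2 : (∑' n : ℕ, Real.exp (-(c * ((((-(n+1)) : ℤ)) : ℝ) ^ 2)))
      = ∑' n : ℕ, Real.exp (-(c * ((n:ℝ)+1) ^ 2)) :=
    tsum_congr fun n => by push_cast; ring_nf
  have htail : (∑' n : ℕ, Real.exp (-(c * ((n:ℝ)+1) ^ 2))) ≤ 2 * Real.exp (-c) := by
    have hle := Summable.tsum_le_tsum (fun n => exp_neg_sq_le_geo hc0 n)
      (summable_exp_nat_shift hc0) (summable_geo_exp hc0)
    have hgeo : (∑' n : ℕ, Real.exp (-c) * Real.exp (-c) ^ n)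
        = Real.exp (-c) * (1 - Real.exp (-c))⁻¹ := by
      rw [tsum_mul_left, tsum_geometric_of_lt_one (Real.exp_pos _).le
        (Real.exp_lt_one_iff.2 (by linarith))]
    have hhalf : Real.exp (-c) ≤ 1/2 := by
      have h2e : (2:ℝ) ≤ Real.exp 1 := by linarith [Real.add_one_le_exp 1]
      have h1e : Real.exp (-c) ≤ Real.exp (-1) := Real.exp_le_exp.2 (by linarith)
      have h3 : Real.exp (-1) = (Real.exp 1)⁻¹ := Real.exp_neg 1
      calc Real.exp (-c) ≤ (Real.exp 1)⁻¹ := h3 ▸ h1e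
        _ ≤ 1/2 := by
          rw [one_div]
          exact inv_anti₀ (by norm_num) h2e
    have hinv : (1 - Real.exp (-c))⁻¹ ≤ 2 := by
      rw [inv_le_iff_one_le_mul₀ (by linarith)]
      linarith
    have hnn : (0:ℝ) ≤ Real.exp (-c) := (Real.exp_pos _).le
    calc (∑' n : ℕ, Real.exp (-(c * ((n:ℝ)+1) ^ 2)))
        ≤ Real.exp (-c) * (1 - Real.exp (-c))⁻¹ := hgeo ▸ hle
      _ ≤ Real.exp (-c) * 2 := by
          apply mul_le_mul_of_nonneg_left hinv hnn
      _ = 2 * Real.exp (-c) := by ring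
  linarith [htail, e1, e2]

lemma gauss_lattice_summable {α Δ : ℝ} (hα : 0 < α) (hΔ : 0 < Δ) (t : ℝ) :
    Summable fun m : ℤ => Real.exp (-(1/2) * (α * (t + (m:ℝ) * Δ) ^ 2)) := by
  have hc : 0 < α * Δ^2 / 4 := by positivity
  apply Summable.of_nonneg_of_le (fun _ => (Real.exp_pos _).le) (fun m => ?_)
    ((summable_exp_neg_int_sq hc).mul_left (Real.exp (α * t^2 / 2)))
  rw [← Real.exp_add]
  apply Real.exp_le_exp.2
  nlinarith [mul_nonneg hα.le (sq_nonneg (2*t + (m:ℝ)*Δ))]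

lemma gauss_lattice_bound {α Δ t : ℝ} (hα : 0 < α) (hΔ : 0 < Δ) (h1 : α * Δ ^ 2 ≤ 1) :
    Δ * ∑' m : ℤ, Real.exp (-(1/2) * (α * (t + (m:ℝ) * Δ) ^ 2))
      ≤ Real.sqrt (2 * Real.pi / α) * (1 + (α * Δ ^ 2) ^ 2) := by
  have hπ := Real.pi_pos
  set u : ℝ := α * Δ ^ 2 with hu_def
  have hu : 0 < u := by positivity
  set a : ℝ := u / (2 * Real.pi) with ha_def
  set b : ℝ := -(α * t * Δ) / (2 * Real.pi) with hb_def
  have ha : 0 < a := by positivity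
  set c : ℝ := Real.pi / a with hc_def
  have hc : 0 < c := by positivity
  have hcu : c * u = 2 * Real.pi ^ 2 := by
    rw [hc_def, ha_def]; field_simp
  have hc1 : 1 ≤ c := by nlinarith [Real.pi_gt_three]
  -- pointwise identity
  have hpt : ∀ m : ℤ, Real.exp (-(1/2) * (α * (t + (m:ℝ) * Δ) ^ 2))
      = Real.exp (-(α * t^2)/2) * Real.exp (-(Real.pi * a) * (m:ℝ)^2 + (2*Real.pi*b) * (m:ℝ)) := by
    intro m
    rw [← Real.exp_add]
    congr 1
    rw [ha_def, hb_def]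
    field_simp
    ring
  -- the real theta sum
  set S : ℝ := ∑' m : ℤ, Real.exp (-(Real.pi * a) * (m:ℝ)^2 + (2*Real.pi*b) * (m:ℝ)) with hS_def
  have hSsum : Summable fun m : ℤ =>
      Real.exp (-(Real.pi * a) * (m:ℝ)^2 + (2*Real.pi*b) * (m:ℝ)) := by
    apply ((gauss_lattice_summable hα hΔ t).mul_left (Real.exp (-(α * t^2)/2))⁻¹).congr
    intro m
    rw [hpt m, ← mul_assoc, inv_mul_cancel₀ (Real.exp_pos _).ne', one_mul]
  have hSnonneg : 0 ≤ S := tsum_nonneg (fun m => (Real.exp_pos _).le)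
  -- complex Poisson summation
  have hare : (0:ℝ) < ((a:ℂ)).re := by simpa using ha
  have hcomplex : (S : ℂ) = 1 / (a:ℂ) ^ (1/2 : ℂ) *
      ∑' n : ℤ, Complex.exp (-(Real.pi:ℂ) / (a:ℂ) * ((n:ℂ) + Complex.I * (b:ℂ)) ^ 2) := by
    rw [hS_def, Complex.ofReal_tsum]
    rw [← Complex.tsum_exp_neg_quadratic hare (b:ℂ)]
    refine tsum_congr fun m => ?_
    rw [Complex.ofReal_exp]
    congr 1
    push_cast
    ring
  -- norm of each term on RHS
  have hterm : ∀ n : ℤ, ‖Complex.exp (-(Real.pi:ℂ) / (a:ℂ) * ((n:ℂ) + Complex.I * (b:ℂ)) ^ 2)‖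
      = Real.exp (c * b^2) * Real.exp (-(c * (n:ℝ)^2)) := by
    intro n
    have harg : (-(Real.pi:ℂ) / (a:ℂ) * ((n:ℂ) + Complex.I * (b:ℂ)) ^ 2)
        = ((c * b^2 - c * (n:ℝ)^2 : ℝ) : ℂ) + ((-(2*c*(n:ℝ)*b) : ℝ) : ℂ) * Complex.I := by
      have hane : (a:ℂ) ≠ 0 := by exact_mod_cast ha.ne'
      rw [hc_def]
      push_cast
      field_simp
      ring_nf
      rw [Complex.I_sq]
      ring
    rw [harg, Complex.norm_exp]
    have hre : ((((c * b^2 - c * (n:ℝ)^2 : ℝ)) : ℂ) + ((-(2*c*(n:ℝ)*b) : ℝ) : ℂ) * Complex.I).re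
        = c * b^2 - c * (n:ℝ)^2 := by simp [← Complex.ofReal_pow]
    rw [hre, ← Real.exp_add]
    ring_nf
  have hnormsum : Summable fun n : ℤ =>
      ‖Complex.exp (-(Real.pi:ℂ) / (a:ℂ) * ((n:ℂ) + Complex.I * (b:ℂ)) ^ 2)‖ := by
    apply ((summable_exp_neg_int_sq hc).mul_left (Real.exp (c * b^2))).congr
    intro n; rw [hterm n]
  -- bound S
  have hpow : (a:ℂ) ^ (1/2 : ℂ) = ((Real.sqrt a : ℝ) : ℂ) := by
    rw [Real.sqrt_eq_rpow, Complex.ofReal_cpow ha.le]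
    norm_num
  have hsqa : 0 < Real.sqrt a := Real.sqrt_pos.2 ha
  have hSle : S ≤ (Real.sqrt a)⁻¹ * (Real.exp (c * b^2) * (1 + 4 * Real.exp (-c))) := by
    have h0 : S = ‖(S:ℂ)‖ := by
      rw [Complex.norm_real, Real.norm_eq_abs, abs_of_nonneg hSnonneg]
    rw [h0, hcomplex, norm_mul]
    have hn1 : ‖1 / (a:ℂ) ^ (1/2 : ℂ)‖ = (Real.sqrt a)⁻¹ := by
      rw [hpow, norm_div, norm_one, Complex.norm_real, Real.norm_eq_abs,
        abs_of_nonneg (Real.sqrt_nonneg a), one_div]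
    rw [hn1]
    apply mul_le_mul_of_nonneg_left _ (inv_nonneg.2 (Real.sqrt_nonneg a))
    calc ‖∑' n : ℤ, Complex.exp (-(Real.pi:ℂ) / (a:ℂ) * ((n:ℂ) + Complex.I * (b:ℂ)) ^ 2)‖
        ≤ ∑' n : ℤ, ‖Complex.exp (-(Real.pi:ℂ) / (a:ℂ) * ((n:ℂ) + Complex.I * (b:ℂ)) ^ 2)‖ :=
          norm_tsum_le_tsum_norm hnormsum
      _ = Real.exp (c * b^2) * ∑' n : ℤ, Real.exp (-(c * (n:ℝ)^2)) := by
          rw [← tsum_mul_left]; exact tsum_congr fun n => hterm n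
      _ ≤ Real.exp (c * b^2) * (1 + 4 * Real.exp (-c)) := by
          exact mul_le_mul_of_nonneg_left (tsum_exp_neg_int_sq_le hc1) (Real.exp_pos _).le
  -- exponent cancellation
  have hcb : c * b^2 = α * t^2 / 2 := by
    rw [hc_def, hb_def, ha_def, hu_def]
    field_simp
  -- the sqrt identity
  have hsqrt : Δ * (Real.sqrt a)⁻¹ = Real.sqrt (2 * Real.pi / α) := by
    have h2 : 2 * Real.pi / α = Δ^2 / a := by
      rw [ha_def, hu_def]; field_simp
    rw [h2, Real.sqrt_div (sq_nonneg Δ), Real.sqrt_sq hΔ.le, div_eq_mul_inv]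
  -- tail bound
  have htail : 4 * Real.exp (-c) ≤ u ^ 2 := by
    have hsq : Real.exp (c/2) ^ 2 = Real.exp c := by
      rw [sq, ← Real.exp_add]; ring_nf
    have hec : c^2/4 ≤ Real.exp c := by
      nlinarith [Real.add_one_le_exp (c/2), hsq, hc.le]
    have hinv : Real.exp (-c) ≤ 4 / c^2 := by
      rw [Real.exp_neg]
      rw [inv_le_iff_one_le_mul₀ (Real.exp_pos _)]
      rw [div_mul_eq_mul_div, le_div_iff₀ (by positivity)]
      nlinarith
    have h16 : 16 ≤ (c*u)^2 := by
      rw [hcu]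
      have h9 : (9:ℝ) ≤ Real.pi^2 := by nlinarith [Real.pi_gt_three]
      nlinarith [h9]
    have hc2 : (0:ℝ) < c^2 := by positivity
    have hA : Real.exp (-c) * c^2 ≤ 4 := by
      rw [← le_div_iff₀ hc2]; exact hinv
    nlinarith [hA, h16, hc2, (Real.exp_pos (-c)).le]
  -- assemble
  have hrw : (∑' m : ℤ, Real.exp (-(1/2) * (α * (t + (m:ℝ) * Δ) ^ 2)))
      = Real.exp (-(α * t^2)/2) * S := by
    rw [hS_def, ← tsum_mul_left]
    exact tsum_congr fun m => hpt m
  rw [hrw]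
  calc Δ * (Real.exp (-(α * t^2)/2) * S)
      ≤ Δ * (Real.exp (-(α * t^2)/2) *
          ((Real.sqrt a)⁻¹ * (Real.exp (c * b^2) * (1 + 4 * Real.exp (-c))))) := by
        apply mul_le_mul_of_nonneg_left _ hΔ.le
        exact mul_le_mul_of_nonneg_left hSle (Real.exp_pos _).le
    _ = (Δ * (Real.sqrt a)⁻¹) * (Real.exp (-(α * t^2)/2) * Real.exp (c * b^2))
          * (1 + 4 * Real.exp (-c)) := by ring
    _ = Real.sqrt (2 * Real.pi / α) * (1 + 4 * Real.exp (-c)) := by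
        rw [hsqrt, hcb, ← Real.exp_add]
        ring_nf
        simp
    _ ≤ Real.sqrt (2 * Real.pi / α) * (1 + u ^ 2) := by
        apply mul_le_mul_of_nonneg_left _ (Real.sqrt_nonneg _)
        linarith

lemma trapWeight_nonneg (N : ℕ) (l : ℤ) : 0 ≤ trapWeight N l := by
  unfold trapWeight; split_ifs <;> norm_num

lemma trapWeight_le_one (N : ℕ) (l : ℤ) : trapWeight N l ≤ 1 := by
  unfold trapWeight; split_ifs <;> norm_num

lemma row_bound {α Δ : ℝ} (hα : 0 < α) (hΔ : 0 < Δ) (h1 : α * Δ ^ 2 ≤ 1) (t : ℝ)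
    (n : ℤ) (s : Finset ℤ) :
    ∑ l ∈ s, Real.exp (-(1/2) * (α * (((n - l : ℤ) : ℝ) * Δ + t) ^ 2))
      ≤ Real.sqrt (2 * Real.pi / α) * (1 + (α * Δ ^ 2) ^ 2) / Δ := by
  have hsum0 : Summable fun m : ℤ => Real.exp (-(1/2) * (α * (t + (m:ℝ) * Δ) ^ 2)) :=
    gauss_lattice_summable hα hΔ t
  have hsum : Summable fun l : ℤ =>
      Real.exp (-(1/2) * (α * (((n - l : ℤ) : ℝ) * Δ + t) ^ 2)) := by
    have h := ((Equiv.subLeft n).summable_iff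
      (f := fun m : ℤ => Real.exp (-(1/2) * (α * (t + (m:ℝ) * Δ) ^ 2)))).2 hsum0
    apply h.congr
    intro l
    simp only [Function.comp, Equiv.subLeft_apply]
    push_cast
    ring_nf
  have h2 : (∑' l : ℤ, Real.exp (-(1/2) * (α * (((n - l : ℤ) : ℝ) * Δ + t) ^ 2)))
      = ∑' m : ℤ, Real.exp (-(1/2) * (α * (t + (m:ℝ) * Δ) ^ 2)) := by
    rw [← (Equiv.subLeft n).tsum_eq
      (fun m : ℤ => Real.exp (-(1/2) * (α * (t + (m:ℝ) * Δ) ^ 2)))]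
    refine tsum_congr fun l => ?_
    simp only [Equiv.subLeft_apply]
    push_cast
    ring_nf
  calc ∑ l ∈ s, Real.exp (-(1/2) * (α * (((n - l : ℤ) : ℝ) * Δ + t) ^ 2))
      ≤ ∑' l : ℤ, Real.exp (-(1/2) * (α * (((n - l : ℤ) : ℝ) * Δ + t) ^ 2)) :=
        Summable.sum_le_tsum s (fun _ _ => (Real.exp_pos _).le) hsum
    _ = ∑' m : ℤ, Real.exp (-(1/2) * (α * (t + (m:ℝ) * Δ) ^ 2)) := h2
    _ ≤ Real.sqrt (2 * Real.pi / α) * (1 + (α * Δ ^ 2) ^ 2) / Δ := by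
        rw [le_div_iff₀ hΔ]
        calc (∑' m : ℤ, Real.exp (-(1/2) * (α * (t + (m:ℝ) * Δ) ^ 2))) * Δ
            = Δ * ∑' m : ℤ, Real.exp (-(1/2) * (α * (t + (m:ℝ) * Δ) ^ 2)) := by ring
          _ ≤ _ := gauss_lattice_bound hα hΔ h1

lemma lattice2d_bound {A B D detS : ℝ} (hD : 0 < D) (hdetpos : 0 < detS)
    (hdet : detS = A * D - B ^ 2)
    {Δx Δy : ℝ} (hΔx : 0 < Δx) (hΔy : 0 < Δy)
    (hx : D * Δx ^ 2 / detS ≤ 1) (hy : Δy ^ 2 / D ≤ 1)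
    (p q : ℝ) (N J : ℕ) (n j : ℤ) :
    Δx * Δy * ∑ l ∈ Finset.Icc (-(N:ℤ)) (N:ℤ), ∑ d ∈ Finset.Icc (-(J:ℤ)) (J:ℤ),
      trapWeight N l * trapWeight J d *
        (Real.exp (-(1/2) * ((D * (((n - l : ℤ):ℝ) * Δx + p) ^ 2
            - 2 * B * (((n - l : ℤ):ℝ) * Δx + p) * (((j - d : ℤ):ℝ) * Δy + q)
            + A * (((j - d : ℤ):ℝ) * Δy + q) ^ 2) / detS))
          / (2 * Real.pi * Real.sqrt detS))
      ≤ (1 + (D * Δx ^ 2 / detS) ^ 2) * (1 + (Δy ^ 2 / D) ^ 2) := by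
  have hπ := Real.pi_pos
  set a : ℝ := D / detS with ha_def
  have ha : 0 < a := by positivity
  have haΔ : a * Δx ^ 2 ≤ 1 := by
    rw [ha_def, div_mul_eq_mul_div]
    exact hx
  have hyα : (1/D) * Δy ^ 2 ≤ 1 := by
    rw [one_div, inv_mul_eq_div]
    exact hy
  have hDα : (0:ℝ) < 1/D := by positivity
  set c0 : ℝ := (2 * Real.pi * Real.sqrt detS)⁻¹ with hc0_def
  have hc0 : 0 < c0 := by positivity
  -- notation
  set X : ℤ → ℝ := fun l => ((n - l : ℤ):ℝ) * Δx + p with hX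
  set Y : ℤ → ℝ := fun d => ((j - d : ℤ):ℝ) * Δy + q with hY
  set E : ℤ → ℤ → ℝ := fun l d =>
    Real.exp (-(1/2) * (a * (((n - l : ℤ):ℝ) * Δx + (p - B/D * Y d)) ^ 2)) with hE
  set F : ℤ → ℝ := fun d =>
    Real.exp (-(1/2) * ((1/D) * (((j - d : ℤ):ℝ) * Δy + q) ^ 2)) with hF
  have hkey : ∀ l d : ℤ,
      Real.exp (-(1/2) * ((D * X l ^ 2 - 2 * B * X l * Y d + A * Y d ^ 2) / detS))
        / (2 * Real.pi * Real.sqrt detS) = c0 * (E l d * F d) := by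
    intro l d
    have hq : (D * X l ^ 2 - 2 * B * X l * Y d + A * Y d ^ 2) / detS
        = a * (X l - B/D * Y d) ^ 2 + (1/D) * Y d ^ 2 := by
      rw [ha_def, hdet]
      have hD' : D ≠ 0 := hD.ne'
      have hd' : A * D - B ^ 2 ≠ 0 := by rw [← hdet]; exact hdetpos.ne'
      have hd'' : D * A - B ^ 2 ≠ 0 := by rw [mul_comm]; exact hd'
      field_simp
      ring
    rw [hq]
    have : -(1/2) * (a * (X l - B/D * Y d) ^ 2 + (1/D) * Y d ^ 2)
        = -(1/2) * (a * (X l - B/D * Y d) ^ 2) + -(1/2) * ((1/D) * Y d ^ 2) := by ring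
    rw [this, Real.exp_add]
    rw [div_eq_inv_mul]
    rw [hc0_def, hE, hF, hY, hX]
    ring_nf
  have hEpos : ∀ l d, 0 ≤ E l d := fun l d => (Real.exp_pos _).le
  have hFpos : ∀ d, 0 ≤ F d := fun d => (Real.exp_pos _).le
  set Rx : ℝ := Real.sqrt (2 * Real.pi / a) * (1 + (a * Δx ^ 2) ^ 2) with hRx
  set Ry : ℝ := Real.sqrt (2 * Real.pi / (1/D)) * (1 + ((1/D) * Δy ^ 2) ^ 2) with hRy
  have hRxpos : 0 ≤ Rx := by positivity
  have hRypos : 0 ≤ Ry := by positivity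
  have hrowE : ∀ d : ℤ, ∑ l ∈ Finset.Icc (-(N:ℤ)) (N:ℤ), E l d ≤ Rx / Δx := fun d =>
    row_bound ha hΔx haΔ (p - B/D * Y d) n _
  have hrowF : ∑ d ∈ Finset.Icc (-(J:ℤ)) (J:ℤ), F d ≤ Ry / Δy :=
    row_bound hDα hΔy hyα q j _
  -- main chain
  have hmain : (∑ l ∈ Finset.Icc (-(N:ℤ)) (N:ℤ), ∑ d ∈ Finset.Icc (-(J:ℤ)) (J:ℤ),
      trapWeight N l * trapWeight J d * (c0 * (E l d * F d)))
      ≤ c0 * ((Rx / Δx) * (Ry / Δy)) := by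
    have step1 : (∑ l ∈ Finset.Icc (-(N:ℤ)) (N:ℤ), ∑ d ∈ Finset.Icc (-(J:ℤ)) (J:ℤ),
        trapWeight N l * trapWeight J d * (c0 * (E l d * F d)))
        ≤ ∑ l ∈ Finset.Icc (-(N:ℤ)) (N:ℤ), ∑ d ∈ Finset.Icc (-(J:ℤ)) (J:ℤ),
          c0 * (E l d * F d) := by
      refine Finset.sum_le_sum fun l _ => Finset.sum_le_sum fun d _ => ?_
      have h1 := trapWeight_le_one N l
      have h2 := trapWeight_le_one J d
      have h3 := trapWeight_nonneg N l
      have h4 := trapWeight_nonneg J d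
      have h5 : 0 ≤ c0 * (E l d * F d) := by
        have := hEpos l d; have := hFpos d; positivity
      have h6 : trapWeight N l * trapWeight J d ≤ 1 := by nlinarith
      calc trapWeight N l * trapWeight J d * (c0 * (E l d * F d))
          ≤ 1 * (c0 * (E l d * F d)) := mul_le_mul_of_nonneg_right h6 h5
        _ = c0 * (E l d * F d) := one_mul _
    have step2 : (∑ l ∈ Finset.Icc (-(N:ℤ)) (N:ℤ), ∑ d ∈ Finset.Icc (-(J:ℤ)) (J:ℤ),
        c0 * (E l d * F d))
        = ∑ d ∈ Finset.Icc (-(J:ℤ)) (J:ℤ), c0 *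
            ((∑ l ∈ Finset.Icc (-(N:ℤ)) (N:ℤ), E l d) * F d) := by
      rw [Finset.sum_comm]
      refine Finset.sum_congr rfl fun d _ => ?_
      rw [Finset.sum_mul, Finset.mul_sum]
    have step3 : (∑ d ∈ Finset.Icc (-(J:ℤ)) (J:ℤ), c0 *
        ((∑ l ∈ Finset.Icc (-(N:ℤ)) (N:ℤ), E l d) * F d))
        ≤ ∑ d ∈ Finset.Icc (-(J:ℤ)) (J:ℤ), c0 * ((Rx / Δx) * F d) := by
      refine Finset.sum_le_sum fun d _ => ?_
      apply mul_le_mul_of_nonneg_left _ hc0.le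
      exact mul_le_mul_of_nonneg_right (hrowE d) (hFpos d)
    have step4 : (∑ d ∈ Finset.Icc (-(J:ℤ)) (J:ℤ), c0 * ((Rx / Δx) * F d))
        = c0 * (Rx / Δx) * ∑ d ∈ Finset.Icc (-(J:ℤ)) (J:ℤ), F d := by
      rw [Finset.mul_sum]
      refine Finset.sum_congr rfl fun d _ => by ring
    have step5 : c0 * (Rx / Δx) * (∑ d ∈ Finset.Icc (-(J:ℤ)) (J:ℤ), F d)
        ≤ c0 * (Rx / Δx) * (Ry / Δy) := by
      apply mul_le_mul_of_nonneg_left hrowF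
      positivity
    calc _ ≤ _ := step1
      _ = _ := step2
      _ ≤ _ := step3
      _ = _ := step4
      _ ≤ _ := step5
      _ = c0 * ((Rx / Δx) * (Ry / Δy)) := by ring
  -- constant identity
  have hconst : Δx * Δy * (c0 * ((Rx / Δx) * (Ry / Δy)))
      = (1 + (a * Δx ^ 2) ^ 2) * (1 + ((1/D) * Δy ^ 2) ^ 2) := by
    have hsq : Real.sqrt (2 * Real.pi / a) * Real.sqrt (2 * Real.pi / (1/D))
        = 2 * Real.pi * Real.sqrt detS := by
      rw [← Real.sqrt_mul (by positivity)]
      have hprod : 2 * Real.pi / a * (2 * Real.pi / (1/D)) = (2 * Real.pi) ^ 2 * detS := by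
        rw [ha_def]
        field_simp
      rw [hprod, Real.sqrt_mul (by positivity), Real.sqrt_sq (by positivity)]
    have h2πd : (2 * Real.pi * Real.sqrt detS) ≠ 0 := by positivity
    calc Δx * Δy * (c0 * ((Rx / Δx) * (Ry / Δy))) = c0 * (Rx * Ry) := by
          field_simp
      _ = c0 * ((Real.sqrt (2 * Real.pi / a) * Real.sqrt (2 * Real.pi / (1/D)))
            * ((1 + (a * Δx ^ 2) ^ 2) * (1 + ((1/D) * Δy ^ 2) ^ 2))) := by
          rw [hRx, hRy]; ring
      _ = c0 * ((2 * Real.pi * Real.sqrt detS)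
            * ((1 + (a * Δx ^ 2) ^ 2) * (1 + ((1/D) * Δy ^ 2) ^ 2))) := by rw [hsq]
      _ = (1 + (a * Δx ^ 2) ^ 2) * (1 + ((1/D) * Δy ^ 2) ^ 2) := by
          rw [hc0_def, ← mul_assoc, inv_mul_cancel₀ h2πd, one_mul]
  -- finish
  calc Δx * Δy * ∑ l ∈ Finset.Icc (-(N:ℤ)) (N:ℤ), ∑ d ∈ Finset.Icc (-(J:ℤ)) (J:ℤ),
      trapWeight N l * trapWeight J d *
        (Real.exp (-(1/2) * ((D * (((n - l : ℤ):ℝ) * Δx + p) ^ 2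
            - 2 * B * (((n - l : ℤ):ℝ) * Δx + p) * (((j - d : ℤ):ℝ) * Δy + q)
            + A * (((j - d : ℤ):ℝ) * Δy + q) ^ 2) / detS))
          / (2 * Real.pi * Real.sqrt detS))
      = Δx * Δy * ∑ l ∈ Finset.Icc (-(N:ℤ)) (N:ℤ), ∑ d ∈ Finset.Icc (-(J:ℤ)) (J:ℤ),
          trapWeight N l * trapWeight J d * (c0 * (E l d * F d)) := by
        congr 1
        refine Finset.sum_congr rfl fun l _ => Finset.sum_congr rfl fun d _ => ?_
        rw [← hkey l d]
    _ ≤ Δx * Δy * (c0 * ((Rx / Δx) * (Ry / Δy))) := by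
        apply mul_le_mul_of_nonneg_left hmain (by positivity)
    _ = (1 + (a * Δx ^ 2) ^ 2) * (1 + ((1/D) * Δy ^ 2) ^ 2) := hconst
    _ = (1 + (D * Δx ^ 2 / detS) ^ 2) * (1 + (Δy ^ 2 / D) ^ 2) := by
        rw [ha_def]
        ring_nf

lemma matSum_eq (Δτ : ℝ) (σx σy ρ σtx σty ρh : ℝ) (k : ℕ) :
    Δτ • covMat σx σy ρ + (k : ℝ) • jumpCov σtx σty ρh
      = !![Δτ * σx^2 + k * σtx^2, Δτ * (ρ*σx*σy) + k * (ρh*σtx*σty);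
           Δτ * (ρ*σx*σy) + k * (ρh*σtx*σty), Δτ * σy^2 + k * σty^2] := by
  ext i j
  fin_cases i <;> fin_cases j <;>
    simp [covMat, jumpCov, Matrix.smul_apply] <;> ring

lemma det_explicit (A B D : ℝ) : (!![A,B;B,D]).det = A * D - B ^ 2 := by
  rw [Matrix.det_fin_two_of]; ring

lemma quad_eval (A B D : ℝ) (hdet : A * D - B ^ 2 ≠ 0) (v : Fin 2 → ℝ) :
    v ⬝ᵥ ((!![A,B;B,D])⁻¹).mulVec v
      = (D * (v 0) ^ 2 - 2 * B * (v 0) * (v 1) + A * (v 1) ^ 2) / (A * D - B ^ 2) := by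
  have hd : (!![A,B;B,D]).det = A * D - B ^ 2 := det_explicit A B D
  rw [Matrix.inv_def, hd, Matrix.adjugate_fin_two, Ring.inverse_eq_inv']
  simp [Matrix.mulVec, dotProduct, Fin.sum_univ_two]
  field_simp
  ring

lemma vec_eval (β μ : Fin 2 → ℝ) (k : ℕ) (x y : ℝ) :
    (β + ![x, y] + (k : ℝ) • μ) 0 = x + (β 0 + k * μ 0)
    ∧ (β + ![x, y] + (k : ℝ) • μ) 1 = y + (β 1 + k * μ 1) := by
  constructor <;> simp [Matrix.vecHead, Matrix.vecTail] <;> ring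

lemma mertonTerm_nonneg (lam Δτ : ℝ) (hlam : 0 ≤ lam) (hΔτ : 0 ≤ Δτ)
    (C CM : Matrix (Fin 2) (Fin 2) ℝ) (β μ z : Fin 2 → ℝ) (θ : ℝ) (k : ℕ) :
    0 ≤ mertonTerm lam Δτ C CM β μ z θ k := by
  unfold mertonTerm
  have h1 : 0 ≤ (lam * Δτ) ^ k := pow_nonneg (mul_nonneg hlam hΔτ) k
  apply div_nonneg
  · exact mul_nonneg (div_nonneg h1 (Nat.cast_nonneg _)) (Real.exp_pos _).le
  · positivity

lemma mertonTerm_le (lam Δτ : ℝ) (hlam : 0 ≤ lam) (hΔτ : 0 ≤ Δτ)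
    (C CM : Matrix (Fin 2) (Fin 2) ℝ) (β μ z : Fin 2 → ℝ) (θ : ℝ) (k : ℕ)
    (A B D : ℝ) (hD : 0 < D) (hdet : 0 < A * D - B ^ 2)
    (hS : C + (k : ℝ) • CM = !![A,B;B,D]) :
    mertonTerm lam Δτ C CM β μ z θ k
      ≤ (lam * Δτ) ^ k / (k.factorial : ℝ) *
          (Real.exp θ * (2 * Real.pi * Real.sqrt (A * D - B ^ 2))⁻¹) := by
  unfold mertonTerm
  rw [hS, det_explicit]
  set v := β + z + (k : ℝ) • μ with hv
  have hQ : 0 ≤ v ⬝ᵥ ((!![A,B;B,D])⁻¹).mulVec v := by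
    rw [quad_eval A B D hdet.ne' v]
    apply div_nonneg _ hdet.le
    nlinarith [sq_nonneg (D * (v 0) - B * (v 1)), sq_nonneg (v 1), hdet, hD, sq_nonneg (v 0)]
  have hexp : Real.exp (θ - 1/2 * (v ⬝ᵥ ((!![A,B;B,D])⁻¹).mulVec v)) ≤ Real.exp θ :=
    Real.exp_le_exp.2 (by linarith)
  have hden : (0:ℝ) < 2 * Real.pi * Real.sqrt (A * D - B ^ 2) := by
    have := Real.sqrt_pos.2 hdet
    positivity
  rw [div_eq_mul_inv, mul_assoc]
  apply mul_le_mul_of_nonneg_left _ (div_nonneg (pow_nonneg (mul_nonneg hlam hΔτ) k)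
    (Nat.cast_nonneg _))
  exact mul_le_mul_of_nonneg_right hexp (inv_nonneg.2 hden.le)

lemma quadSum_term_le
    (lam Δτ : ℝ) (hlam : 0 ≤ lam) (hΔτ : 0 ≤ Δτ)
    (Cm CM : Matrix (Fin 2) (Fin 2) ℝ) (β μ : Fin 2 → ℝ) (θ : ℝ) (k : ℕ)
    (A B D : ℝ) (hD : 0 < D) (hdet : 0 < A * D - B ^ 2)
    (hS : Cm + (k : ℝ) • CM = !![A,B;B,D])
    {Δx Δy : ℝ} (hΔx : 0 < Δx) (hΔy : 0 < Δy)
    (hx : D * Δx ^ 2 / (A * D - B ^ 2) ≤ 1) (hy : Δy ^ 2 / D ≤ 1)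
    (N J : ℕ) (n j : ℤ) :
    Δx * Δy * ∑ l ∈ Finset.Icc (-(N:ℤ)) (N:ℤ), ∑ d ∈ Finset.Icc (-(J:ℤ)) (J:ℤ),
        trapWeight N l * trapWeight J d *
          mertonTerm lam Δτ Cm CM β μ ![((n - l : ℤ):ℝ) * Δx, ((j - d : ℤ):ℝ) * Δy] θ k
      ≤ (lam * Δτ) ^ k / (k.factorial : ℝ) * Real.exp θ *
          ((1 + (D * Δx ^ 2 / (A * D - B ^ 2)) ^ 2) * (1 + (Δy ^ 2 / D) ^ 2)) := by
  set p : ℝ := β 0 + k * μ 0 with hp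
  set q : ℝ := β 1 + k * μ 1 with hq
  set w : ℝ := (lam * Δτ) ^ k / (k.factorial : ℝ) with hw
  have hw0 : 0 ≤ w := div_nonneg (pow_nonneg (mul_nonneg hlam hΔτ) k) (Nat.cast_nonneg _)
  have hterm : ∀ l d : ℤ,
      mertonTerm lam Δτ Cm CM β μ ![((n - l : ℤ):ℝ) * Δx, ((j - d : ℤ):ℝ) * Δy] θ k
        = w * Real.exp θ *
          (Real.exp (-(1/2) * ((D * (((n - l : ℤ):ℝ) * Δx + p) ^ 2
              - 2 * B * (((n - l : ℤ):ℝ) * Δx + p) * (((j - d : ℤ):ℝ) * Δy + q)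
              + A * (((j - d : ℤ):ℝ) * Δy + q) ^ 2) / (A * D - B ^ 2)))
            / (2 * Real.pi * Real.sqrt (A * D - B ^ 2))) := by
    intro l d
    unfold mertonTerm
    rw [hS, det_explicit]
    rw [quad_eval A B D hdet.ne']
    rw [(vec_eval β μ k (((n - l : ℤ):ℝ) * Δx) (((j - d : ℤ):ℝ) * Δy)).1,
        (vec_eval β μ k (((n - l : ℤ):ℝ) * Δx) (((j - d : ℤ):ℝ) * Δy)).2]
    rw [show ∀ z : ℝ, θ - 1 / 2 * z = θ + -(1/2) * z from fun z => by ring]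
    rw [Real.exp_add, hw]
    ring
  have hsum : (∑ l ∈ Finset.Icc (-(N:ℤ)) (N:ℤ), ∑ d ∈ Finset.Icc (-(J:ℤ)) (J:ℤ),
      trapWeight N l * trapWeight J d *
        mertonTerm lam Δτ Cm CM β μ ![((n - l : ℤ):ℝ) * Δx, ((j - d : ℤ):ℝ) * Δy] θ k)
      = (w * Real.exp θ) * ∑ l ∈ Finset.Icc (-(N:ℤ)) (N:ℤ), ∑ d ∈ Finset.Icc (-(J:ℤ)) (J:ℤ),
        trapWeight N l * trapWeight J d *
          (Real.exp (-(1/2) * ((D * (((n - l : ℤ):ℝ) * Δx + p) ^ 2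
              - 2 * B * (((n - l : ℤ):ℝ) * Δx + p) * (((j - d : ℤ):ℝ) * Δy + q)
              + A * (((j - d : ℤ):ℝ) * Δy + q) ^ 2) / (A * D - B ^ 2)))
            / (2 * Real.pi * Real.sqrt (A * D - B ^ 2))) := by
    rw [Finset.mul_sum]
    refine Finset.sum_congr rfl fun l _ => ?_
    rw [Finset.mul_sum]
    refine Finset.sum_congr rfl fun d _ => ?_
    rw [hterm l d]
    ring
  calc Δx * Δy * ∑ l ∈ Finset.Icc (-(N:ℤ)) (N:ℤ), ∑ d ∈ Finset.Icc (-(J:ℤ)) (J:ℤ),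
        trapWeight N l * trapWeight J d *
          mertonTerm lam Δτ Cm CM β μ ![((n - l : ℤ):ℝ) * Δx, ((j - d : ℤ):ℝ) * Δy] θ k
      = (w * Real.exp θ) * (Δx * Δy * ∑ l ∈ Finset.Icc (-(N:ℤ)) (N:ℤ),
          ∑ d ∈ Finset.Icc (-(J:ℤ)) (J:ℤ),
          trapWeight N l * trapWeight J d *
            (Real.exp (-(1/2) * ((D * (((n - l : ℤ):ℝ) * Δx + p) ^ 2
                - 2 * B * (((n - l : ℤ):ℝ) * Δx + p) * (((j - d : ℤ):ℝ) * Δy + q)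
                + A * (((j - d : ℤ):ℝ) * Δy + q) ^ 2) / (A * D - B ^ 2)))
              / (2 * Real.pi * Real.sqrt (A * D - B ^ 2))) ) := by
        rw [hsum]; ring
    _ ≤ (w * Real.exp θ) * ((1 + (D * Δx ^ 2 / (A * D - B ^ 2)) ^ 2) * (1 + (Δy ^ 2 / D) ^ 2)) := by
        apply mul_le_mul_of_nonneg_left _ (mul_nonneg hw0 (Real.exp_pos _).le)
        exact lattice2d_bound hD hdet rfl hΔx hΔy hx hy p q N J n j
    _ = (lam * Δτ) ^ k / (k.factorial : ℝ) * Real.exp θ *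
          ((1 + (D * Δx ^ 2 / (A * D - B ^ 2)) ^ 2) * (1 + (Δy ^ 2 / D) ^ 2)) := by
        rw [hw]

lemma det_lower_aux (Δτ σx σy ρ σtx σty ρh kk : ℝ) (hΔτ : 0 ≤ Δτ) (hk : 0 ≤ kk)
    (hσx : 0 < σx) (hσy : 0 < σy) (hσtx : 0 < σtx) (hσty : 0 < σty) (hρρh : ρ * ρh ≤ 1) :
    Δτ^2 * (σx^2*σy^2*(1-ρ^2)) + kk^2 * (σtx^2*σty^2*(1-ρh^2))
      ≤ (Δτ*σx^2 + kk*σtx^2) * (Δτ*σy^2 + kk*σty^2)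
        - (Δτ*(ρ*σx*σy) + kk*(ρh*σtx*σty))^2 := by
  nlinarith [mul_nonneg (mul_nonneg hΔτ hk) (sq_nonneg (σx*σty - σtx*σy)),
    mul_nonneg (mul_nonneg hΔτ hk)
      (mul_nonneg (by positivity : (0:ℝ) ≤ 2*σx*σy*σtx*σty)
        (by linarith : (0:ℝ) ≤ 1 - ρ*ρh))]

lemma key1_aux (h C₁ C₃ σy σty D₁ D₂ c01 c02 kk : ℝ)
    (hh : 0 < h) (hh1 : h ≤ 1) (hk : kk = 0 ∨ 1 ≤ kk) (hk0 : 0 ≤ kk)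
    (e1 : c01 * (C₃ * D₁) = σy^2 * C₁^2) (e2 : c02 * D₂ = σty^2 * C₁^2)
    (hC₃ : 0 < C₃) (hD₁ : 0 < D₁) (hD₂ : 0 < D₂) (hc01 : 0 < c01) (hc02 : 0 < c02)
    (hσy : 0 < σy) (hσty : 0 < σty) :
    (C₃*h*σy^2 + kk*σty^2) * (C₁*h)^2 ≤ (c01 + c02) * h * ((C₃*h)^2*D₁ + kk^2*D₂) := by
  have e1' : c01 * (C₃ * D₁) * (C₃ * h^3) = σy^2 * C₁^2 * (C₃ * h^3) := by rw [e1]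
  rcases hk with hk | hk
  · subst hk
    nlinarith [mul_nonneg (mul_nonneg hc02.le (by positivity : (0:ℝ) ≤ C₃^2 * D₁))
      (by positivity : (0:ℝ) ≤ h^3), e1']
  · have e2' : c02 * D₂ * (kk^2 * h) = σty^2 * C₁^2 * (kk^2 * h) := by rw [e2]
    have hkh : kk * h^2 ≤ kk^2 * h := by
      have t1 : kk * h * h ≤ kk * h * 1 :=
        mul_le_mul_of_nonneg_left hh1 (mul_nonneg hk0 hh.le)
      have t2 : 1 * (kk * h) ≤ kk * (kk * h) :=
        mul_le_mul_of_nonneg_right hk (mul_nonneg hk0 hh.le)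
      nlinarith [t1, t2]
    nlinarith [e1', e2',
      mul_nonneg (mul_nonneg hc01.le hD₂.le) (mul_nonneg (sq_nonneg kk) hh.le),
      mul_nonneg (mul_nonneg hc02.le (by positivity : (0:ℝ) ≤ C₃^2 * D₁))
        (by positivity : (0:ℝ) ≤ h^3),
      mul_le_mul_of_nonneg_left hkh (by positivity : (0:ℝ) ≤ σty^2 * C₁^2)]

lemma y1_aux (h C₂ C₃ σy σty c₁ kk : ℝ) (hh : 0 < h) (hk0 : 0 ≤ kk)
    (e3 : c₁ * (C₃ * σy^2) = C₂^2) (hc₁ : 0 < c₁) (hσty : 0 < σty) :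
    (C₂*h)^2 ≤ c₁ * h * (C₃*h*σy^2 + kk*σty^2) := by
  have e3' : c₁ * (C₃ * σy^2) * h^2 = C₂^2 * h^2 := by rw [e3]
  nlinarith [e3', mul_nonneg (mul_nonneg (mul_nonneg hc₁.le hh.le) hk0) (sq_nonneg σty)]

lemma prod_aux (a b ca cb h : ℝ) (ha0 : 0 ≤ a) (hb0 : 0 ≤ b)
    (ha : a ≤ ca * h) (hb : b ≤ cb * h) (hh : 0 < h) (hh1 : h ≤ 1)
    (hca : 0 ≤ ca) (hcb : 0 ≤ cb) :
    (1 + a^2) * (1 + b^2) ≤ 1 + (ca^2 + cb^2 + ca^2*cb^2 + 1) * h^2 := by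
  have h1 : a^2 ≤ (ca*h)^2 := by nlinarith
  have h2 : b^2 ≤ (cb*h)^2 := by nlinarith
  have hh2 : h^2 ≤ 1 := by nlinarith
  have step : (1 + a^2) * (1 + b^2) ≤ (1 + (ca*h)^2) * (1 + (cb*h)^2) := by
    apply mul_le_mul (by linarith) (by linarith) (by positivity) (by positivity)
  refine le_trans step ?_
  nlinarith [mul_nonneg (sq_nonneg (ca*cb)) (mul_nonneg (sq_nonneg h) (sub_nonneg.2 hh2)),
    sq_nonneg (ca*cb*h), sq_nonneg h]


/-- the composite trapezoidal quadrature of the Merton Green's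
function over the grid is bounded by `e^{−rΔτ} + C h²` at every interior node, and
in particular by `1 + (Ch)(Δτ/T) ≤ exp((Ch)Δτ/T)` for any fixed horizon `T > 0`;
the same bounds hold with `g` replaced by any partial sum of its series. -/
theorem quadrature_of_green_bounded
    (r lam σx σy ρ κx κy σtx σty ρh C₁ C₂ C₃ C₁' C₂' : ℝ) (μ : Fin 2 → ℝ)
    (hr : 0 < r) (hlam : 0 ≤ lam) (hσx : 0 < σx) (hσy : 0 < σy)
    (hρ₁ : -1 < ρ) (hρ₂ : ρ < 1)
    (hσtx : 0 < σtx) (hσty : 0 < σty) (hρh₁ : -1 < ρh) (hρh₂ : ρh < 1)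
    (hC₁ : 0 < C₁) (hC₂ : 0 < C₂) (hC₃ : 0 < C₃) (hC₁' : 0 < C₁') (hC₂' : 0 < C₂') :
    ∃ C > (0 : ℝ), ∃ h₀ > (0 : ℝ), ∀ h : ℝ, 0 < h → h < h₀ →
      ∀ _xhat0 _yhat0 : ℝ, ∀ N J : ℕ, 2 ≤ N → 2 ≤ J →
        C₁' / h ≤ 2 * N * (C₁ * h) → C₂' / h ≤ 2 * J * (C₂ * h) →
        ∀ n j : ℤ, 2 * |n| ≤ (N : ℤ) - 2 → 2 * |j| ≤ (J : ℤ) - 2 →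
          (quadSum (C₁ * h) (C₂ * h) N J n j
              (mertonGreen r lam σx σy ρ κx κy (jumpCov σtx σty ρh) μ (C₃ * h)) ≤
            Real.exp (-(r * (C₃ * h))) + C * h ^ 2) ∧
          (∀ T : ℝ, 0 < T →
            quadSum (C₁ * h) (C₂ * h) N J n j
                (mertonGreen r lam σx σy ρ κx κy (jumpCov σtx σty ρh) μ (C₃ * h)) ≤
              1 + C * h * (C₃ * h / T) ∧
            quadSum (C₁ * h) (C₂ * h) N J n j
                (mertonGreen r lam σx σy ρ κx κy (jumpCov σtx σty ρh) μ (C₃ * h)) ≤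
              Real.exp (C * h * (C₃ * h / T))) ∧
          (∀ K : ℕ,
            (quadSum (C₁ * h) (C₂ * h) N J n j
                (mertonGreenPartial r lam σx σy ρ κx κy (jumpCov σtx σty ρh) μ (C₃ * h) K) ≤
              Real.exp (-(r * (C₃ * h))) + C * h ^ 2) ∧
            ∀ T : ℝ, 0 < T →
              quadSum (C₁ * h) (C₂ * h) N J n j
                  (mertonGreenPartial r lam σx σy ρ κx κy (jumpCov σtx σty ρh) μ (C₃ * h) K) ≤
                1 + C * h * (C₃ * h / T) ∧
              quadSum (C₁ * h) (C₂ * h) N J n j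
                  (mertonGreenPartial r lam σx σy ρ κx κy (jumpCov σtx σty ρh) μ (C₃ * h) K) ≤
                Real.exp (C * h * (C₃ * h / T))) := by

  have hρρh : ρ * ρh ≤ 1 := by nlinarith [sq_nonneg (ρ - ρh), sq_nonneg (ρ + ρh)]
  set D₁ : ℝ := σx^2 * σy^2 * (1 - ρ^2) with hD₁_def
  set D₂ : ℝ := σtx^2 * σty^2 * (1 - ρh^2) with hD₂_def
  have hρsq : ρ^2 < 1 := by nlinarith
  have hρhsq : ρh^2 < 1 := by nlinarith
  have hD₁ : 0 < D₁ := by rw [hD₁_def]; exact mul_pos (by positivity) (by linarith)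
  have hD₂ : 0 < D₂ := by rw [hD₂_def]; exact mul_pos (by positivity) (by linarith)
  set c01 : ℝ := σy^2 * C₁^2 / (C₃ * D₁) with hc01_def
  set c02 : ℝ := σty^2 * C₁^2 / D₂ with hc02_def
  set c₀ : ℝ := c01 + c02 with hc₀_def
  set c₁ : ℝ := C₂^2 / (C₃ * σy^2) with hc₁_def
  have hc01 : 0 < c01 := by positivity
  have hc02 : 0 < c02 := by positivity
  have hc₀ : 0 < c₀ := by positivity
  have hc₁pos : 0 < c₁ := by positivity
  set c₂ : ℝ := c₀^2 + c₁^2 + c₀^2 * c₁^2 + 1 with hc₂_def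
  have hc₂ : 0 < c₂ := by positivity
  refine ⟨c₂, hc₂, min 1 (min (1/c₀) (min (1/c₁) (r * C₃ / c₂))), by positivity,
    fun h hh hh₀ _x _y N J hN hJ _hN' _hJ' n j _hn _hj => ?_⟩
  have hh1 : h ≤ 1 := le_trans hh₀.le (min_le_left _ _)
  have hhc₀ : c₀ * h ≤ 1 := by
    have := le_trans hh₀.le (le_trans (min_le_right _ _) (min_le_left _ _))
    rw [le_div_iff₀ hc₀] at this
    linarith [this]
  have hhc₁ : c₁ * h ≤ 1 := by
    have := le_trans hh₀.le (le_trans (min_le_right _ _)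
      (le_trans (min_le_right _ _) (min_le_left _ _)))
    rw [le_div_iff₀ hc₁pos] at this
    linarith [this]
  have hhc₂ : c₂ * h ≤ r * C₃ := by
    have := le_trans hh₀.le (le_trans (min_le_right _ _)
      (le_trans (min_le_right _ _) (min_le_right _ _)))
    rw [le_div_iff₀ hc₂] at this
    linarith [this]
  set Δτ : ℝ := C₃ * h with hΔτ_def
  set Δx : ℝ := C₁ * h with hΔx_def
  set Δy : ℝ := C₂ * h with hΔy_def
  have hΔτ : 0 < Δτ := by positivity
  have hΔx : 0 < Δx := by positivity
  have hΔy : 0 < Δy := by positivity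
  set θ : ℝ := -(r + lam) * Δτ with hθ_def
  set Cm : Matrix (Fin 2) (Fin 2) ℝ := Δτ • covMat σx σy ρ with hCm_def
  set CM : Matrix (Fin 2) (Fin 2) ℝ := jumpCov σtx σty ρh with hCM_def
  set β : Fin 2 → ℝ := Δτ • driftVec r lam σx σy κx κy with hβ_def
  -- per-k matrix data
  set A : ℕ → ℝ := fun k => Δτ * σx^2 + k * σtx^2 with hA_def
  set B : ℕ → ℝ := fun k => Δτ * (ρ*σx*σy) + k * (ρh*σtx*σty) with hB_def
  set D : ℕ → ℝ := fun k => Δτ * σy^2 + k * σty^2 with hD_def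
  have hS : ∀ k : ℕ, Cm + (k:ℝ) • CM = !![A k, B k; B k, D k] := fun k => by
    rw [hCm_def, hCM_def, matSum_eq, hA_def, hB_def, hD_def]
  have hDk : ∀ k : ℕ, 0 < D k := fun k => by
    rw [hD_def]
    have hk0 : (0:ℝ) ≤ (k:ℝ) := Nat.cast_nonneg k
    have h1 : 0 < Δτ * σy^2 := by positivity
    have hk0' : (0:ℝ) ≤ (k:ℝ) := Nat.cast_nonneg k
    exact add_pos_of_pos_of_nonneg h1 (mul_nonneg hk0' (sq_nonneg σty))
  have hdetlb : ∀ k : ℕ, Δτ^2 * D₁ + (k:ℝ)^2 * D₂ ≤ A k * D k - (B k)^2 := fun k => by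
    rw [hA_def, hB_def, hD_def, hD₁_def, hD₂_def]
    exact det_lower_aux Δτ σx σy ρ σtx σty ρh (k:ℝ) hΔτ.le (Nat.cast_nonneg k)
      hσx hσy hσtx hσty hρρh
  have hlbpos : ∀ k : ℕ, 0 < Δτ^2 * D₁ + (k:ℝ)^2 * D₂ := fun k => by
    have h1 : 0 < Δτ^2 * D₁ := by positivity
    exact add_pos_of_pos_of_nonneg h1 (mul_nonneg (sq_nonneg ((k:ℝ))) hD₂.le)
  have hdetpos : ∀ k : ℕ, 0 < A k * D k - (B k)^2 := fun k =>
    lt_of_lt_of_le (hlbpos k) (hdetlb k)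
  have hkey1 : ∀ k : ℕ, D k * Δx^2 ≤ c₀ * h * (Δτ^2 * D₁ + (k:ℝ)^2 * D₂) := fun k => by
    have e1 : c01 * (C₃ * D₁) = σy^2 * C₁^2 := by rw [hc01_def]; field_simp
    have e2 : c02 * D₂ = σty^2 * C₁^2 := by rw [hc02_def]; field_simp
    have hk : (k:ℝ) = 0 ∨ 1 ≤ (k:ℝ) := by
      rcases Nat.eq_zero_or_pos k with hk | hk
      · left; simp [hk]
      · right; exact_mod_cast hk
    rw [hD_def, hΔx_def, hΔτ_def, hc₀_def]
    exact key1_aux h C₁ C₃ σy σty D₁ D₂ c01 c02 (k:ℝ) hh hh1 hk (Nat.cast_nonneg k)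
      e1 e2 hC₃ hD₁ hD₂ hc01 hc02 hσy hσty
  have hx1 : ∀ k : ℕ, D k * Δx^2 / (A k * D k - (B k)^2) ≤ c₀ * h := fun k => by
    rw [div_le_iff₀ (hdetpos k)]
    calc D k * Δx^2 ≤ c₀ * h * (Δτ^2 * D₁ + (k:ℝ)^2 * D₂) := hkey1 k
      _ ≤ c₀ * h * (A k * D k - (B k)^2) :=
        mul_le_mul_of_nonneg_left (hdetlb k) (by positivity)
    
  have hx2 : ∀ k : ℕ, D k * Δx^2 / (A k * D k - (B k)^2) ≤ 1 := fun k =>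
    le_trans (hx1 k) hhc₀
  have hy1 : ∀ k : ℕ, Δy^2 / D k ≤ c₁ * h := fun k => by
    rw [div_le_iff₀ (hDk k)]
    have e3 : c₁ * (C₃ * σy^2) = C₂^2 := by rw [hc₁_def]; field_simp
    rw [hD_def, hΔy_def, hΔτ_def]
    exact y1_aux h C₂ C₃ σy σty c₁ (k:ℝ) hh (Nat.cast_nonneg k) e3 hc₁pos hσty
  have hy2 : ∀ k : ℕ, Δy^2 / D k ≤ 1 := fun k => le_trans (hy1 k) hhc₁
  have hprod : ∀ k : ℕ,
      (1 + (D k * Δx^2 / (A k * D k - (B k)^2))^2) * (1 + (Δy^2 / D k)^2)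
        ≤ 1 + c₂ * h^2 := fun k => by
    have hxnn : 0 ≤ D k * Δx^2 / (A k * D k - (B k)^2) :=
      div_nonneg (by positivity) (hdetpos k).le
    have hynn : 0 ≤ Δy^2 / D k := div_nonneg (by positivity) (hDk k).le
    rw [hc₂_def]
    exact prod_aux _ _ c₀ c₁ h hxnn hynn (hx1 k) (hy1 k) hh hh1 hc₀.le hc₁pos.le
  have hQk : ∀ k : ℕ,
      Δx * Δy * ∑ l ∈ Finset.Icc (-(N:ℤ)) (N:ℤ), ∑ d ∈ Finset.Icc (-(J:ℤ)) (J:ℤ),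
        trapWeight N l * trapWeight J d *
          mertonTerm lam Δτ Cm CM β μ ![((n - l : ℤ):ℝ) * Δx, ((j - d : ℤ):ℝ) * Δy] θ k
      ≤ (lam * Δτ) ^ k / (k.factorial : ℝ) * (Real.exp θ * (1 + c₂ * h^2)) := fun k => by
    calc Δx * Δy * ∑ l ∈ Finset.Icc (-(N:ℤ)) (N:ℤ), ∑ d ∈ Finset.Icc (-(J:ℤ)) (J:ℤ),
        trapWeight N l * trapWeight J d *
          mertonTerm lam Δτ Cm CM β μ ![((n - l : ℤ):ℝ) * Δx, ((j - d : ℤ):ℝ) * Δy] θ k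
        ≤ (lam * Δτ) ^ k / (k.factorial : ℝ) * Real.exp θ *
            ((1 + (D k * Δx^2 / (A k * D k - (B k)^2))^2) * (1 + (Δy^2 / D k)^2)) :=
          quadSum_term_le lam Δτ hlam hΔτ.le Cm CM β μ θ k (A k) (B k) (D k)
            (hDk k) (hdetpos k) (hS k) hΔx hΔy (hx2 k) (hy2 k) N J n j
      _ ≤ (lam * Δτ) ^ k / (k.factorial : ℝ) * Real.exp θ * (1 + c₂ * h^2) := by
          apply mul_le_mul_of_nonneg_left (hprod k)
          have : 0 ≤ (lam * Δτ) ^ k := pow_nonneg (mul_nonneg hlam hΔτ.le) k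
          positivity
      _ = (lam * Δτ) ^ k / (k.factorial : ℝ) * (Real.exp θ * (1 + c₂ * h^2)) := by ring
  -- summability in k
  set M : ℝ := Real.exp θ * (2 * Real.pi * Real.sqrt (Δτ^2 * D₁))⁻¹ with hM_def
  have htermle : ∀ z : Fin 2 → ℝ, ∀ k : ℕ,
      mertonTerm lam Δτ Cm CM β μ z θ k ≤ (lam * Δτ) ^ k / (k.factorial : ℝ) * M := by
    intro z k
    refine le_trans (mertonTerm_le lam Δτ hlam hΔτ.le Cm CM β μ z θ k (A k) (B k) (D k)
      (hDk k) (hdetpos k) (hS k)) ?_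
    apply mul_le_mul_of_nonneg_left _ (div_nonneg (pow_nonneg (mul_nonneg hlam hΔτ.le) k)
      (Nat.cast_nonneg _))
    rw [hM_def]
    apply mul_le_mul_of_nonneg_left _ (Real.exp_pos _).le
    apply inv_anti₀
    · have := Real.sqrt_pos.2 (hlbpos 0)
      have h0 : (0:ℝ) < Real.sqrt (Δτ^2 * D₁) := by
        apply Real.sqrt_pos.2
        positivity
      positivity
    · apply mul_le_mul_of_nonneg_left _ (by positivity : (0:ℝ) ≤ 2 * Real.pi)
      apply Real.sqrt_le_sqrt
      linarith only [hdetlb k, mul_nonneg (sq_nonneg ((k:ℝ))) hD₂.le]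
  have hsummable : ∀ z : Fin 2 → ℝ,
      Summable (fun k : ℕ => mertonTerm lam Δτ Cm CM β μ z θ k) := fun z =>
    Summable.of_nonneg_of_le
      (fun k => mertonTerm_nonneg lam Δτ hlam hΔτ.le Cm CM β μ z θ k)
      (htermle z) ((Real.summable_pow_div_factorial (lam * Δτ)).mul_right M)
  -- swap sum and tsum
  have hswap : quadSum Δx Δy N J n j (mertonGreen r lam σx σy ρ κx κy CM μ Δτ)
      = ∑' k : ℕ, Δx * Δy *
          ∑ l ∈ Finset.Icc (-(N:ℤ)) (N:ℤ), ∑ d ∈ Finset.Icc (-(J:ℤ)) (J:ℤ),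
            trapWeight N l * trapWeight J d *
              mertonTerm lam Δτ Cm CM β μ
                ![((n - l : ℤ):ℝ) * Δx, ((j - d : ℤ):ℝ) * Δy] θ k := by
    unfold quadSum mertonGreen
    rw [← hCm_def, ← hβ_def, ← hθ_def]
    calc Δx * Δy * ∑ l ∈ Finset.Icc (-(N:ℤ)) (N:ℤ), ∑ d ∈ Finset.Icc (-(J:ℤ)) (J:ℤ),
        trapWeight N l * trapWeight J d *
          ∑' k : ℕ, mertonTerm lam Δτ Cm CM β μ
            ![((n - l : ℤ):ℝ) * Δx, ((j - d : ℤ):ℝ) * Δy] θ k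
        = Δx * Δy * ∑ l ∈ Finset.Icc (-(N:ℤ)) (N:ℤ), ∑ d ∈ Finset.Icc (-(J:ℤ)) (J:ℤ),
          ∑' k : ℕ, trapWeight N l * trapWeight J d *
            mertonTerm lam Δτ Cm CM β μ
              ![((n - l : ℤ):ℝ) * Δx, ((j - d : ℤ):ℝ) * Δy] θ k := by
          congr 1
          refine Finset.sum_congr rfl fun l _ => Finset.sum_congr rfl fun d _ => ?_
          exact (tsum_mul_left).symm
      _ = Δx * Δy * ∑ l ∈ Finset.Icc (-(N:ℤ)) (N:ℤ),
          ∑' k : ℕ, ∑ d ∈ Finset.Icc (-(J:ℤ)) (J:ℤ),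
            trapWeight N l * trapWeight J d *
              mertonTerm lam Δτ Cm CM β μ
                ![((n - l : ℤ):ℝ) * Δx, ((j - d : ℤ):ℝ) * Δy] θ k := by
          congr 1
          refine Finset.sum_congr rfl fun l _ => ?_
          exact (Summable.tsum_finsetSum (fun d _ => ((hsummable _).mul_left _))).symm
      _ = Δx * Δy * ∑' k : ℕ, ∑ l ∈ Finset.Icc (-(N:ℤ)) (N:ℤ),
          ∑ d ∈ Finset.Icc (-(J:ℤ)) (J:ℤ),
            trapWeight N l * trapWeight J d *
              mertonTerm lam Δτ Cm CM β μ
                ![((n - l : ℤ):ℝ) * Δx, ((j - d : ℤ):ℝ) * Δy] θ k := by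
          congr 1
          refine (Summable.tsum_finsetSum (fun l _ => ?_)).symm
          exact summable_sum (fun d _ => ((hsummable _).mul_left _))
      _ = ∑' k : ℕ, Δx * Δy *
          ∑ l ∈ Finset.Icc (-(N:ℤ)) (N:ℤ), ∑ d ∈ Finset.Icc (-(J:ℤ)) (J:ℤ),
            trapWeight N l * trapWeight J d *
              mertonTerm lam Δτ Cm CM β μ
                ![((n - l : ℤ):ℝ) * Δx, ((j - d : ℤ):ℝ) * Δy] θ k := tsum_mul_left.symm
  -- nonnegativity of each quadrature term
  have hQnonneg : ∀ k : ℕ, 0 ≤ Δx * Δy *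
      ∑ l ∈ Finset.Icc (-(N:ℤ)) (N:ℤ), ∑ d ∈ Finset.Icc (-(J:ℤ)) (J:ℤ),
        trapWeight N l * trapWeight J d *
          mertonTerm lam Δτ Cm CM β μ
            ![((n - l : ℤ):ℝ) * Δx, ((j - d : ℤ):ℝ) * Δy] θ k := fun k => by
    apply mul_nonneg (by positivity)
    refine Finset.sum_nonneg fun l _ => Finset.sum_nonneg fun d _ => ?_
    exact mul_nonneg (mul_nonneg (trapWeight_nonneg N l) (trapWeight_nonneg J d))
      (mertonTerm_nonneg lam Δτ hlam hΔτ.le Cm CM β μ _ θ k)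
  have hQsummable : Summable (fun k : ℕ => Δx * Δy *
      ∑ l ∈ Finset.Icc (-(N:ℤ)) (N:ℤ), ∑ d ∈ Finset.Icc (-(J:ℤ)) (J:ℤ),
        trapWeight N l * trapWeight J d *
          mertonTerm lam Δτ Cm CM β μ
            ![((n - l : ℤ):ℝ) * Δx, ((j - d : ℤ):ℝ) * Δy] θ k) :=
    Summable.of_nonneg_of_le hQnonneg hQk
      ((Real.summable_pow_div_factorial (lam * Δτ)).mul_right _)
  have hexp_tsum : (∑' k : ℕ, (lam * Δτ) ^ k / (k.factorial : ℝ)) = Real.exp (lam * Δτ) := by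
    rw [Real.exp_eq_exp_ℝ, NormedSpace.exp_eq_tsum_div]
  have hGreen : quadSum Δx Δy N J n j (mertonGreen r lam σx σy ρ κx κy CM μ Δτ)
      ≤ Real.exp (-(r * (C₃ * h))) * (1 + c₂ * h^2) := by
    rw [hswap]
    calc (∑' k : ℕ, Δx * Δy *
        ∑ l ∈ Finset.Icc (-(N:ℤ)) (N:ℤ), ∑ d ∈ Finset.Icc (-(J:ℤ)) (J:ℤ),
          trapWeight N l * trapWeight J d *
            mertonTerm lam Δτ Cm CM β μ
              ![((n - l : ℤ):ℝ) * Δx, ((j - d : ℤ):ℝ) * Δy] θ k)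
        ≤ ∑' k : ℕ, (lam * Δτ) ^ k / (k.factorial : ℝ) * (Real.exp θ * (1 + c₂ * h^2)) :=
          Summable.tsum_le_tsum hQk hQsummable
            ((Real.summable_pow_div_factorial (lam * Δτ)).mul_right _)
      _ = (∑' k : ℕ, (lam * Δτ) ^ k / (k.factorial : ℝ)) * (Real.exp θ * (1 + c₂ * h^2)) :=
          tsum_mul_right
      _ = Real.exp (lam * Δτ) * Real.exp θ * (1 + c₂ * h^2) := by rw [hexp_tsum]; ring
      _ = Real.exp (-(r * (C₃ * h))) * (1 + c₂ * h^2) := by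
          rw [← Real.exp_add]
          congr 2
          rw [hθ_def, hΔτ_def]
          ring
  have hexpneg : Real.exp (-(r * (C₃ * h))) ≤ 1 := by
    have h1 : Real.exp (-(r * (C₃ * h))) ≤ Real.exp 0 := by
      apply Real.exp_le_exp.2
      have h0 : 0 < r * (C₃ * h) := by positivity
      linarith only [h0]
    rwa [Real.exp_zero] at h1
  have hch2 : (0:ℝ) ≤ c₂ * h^2 := by positivity
  have hgoal1 : quadSum Δx Δy N J n j (mertonGreen r lam σx σy ρ κx κy CM μ Δτ)
      ≤ Real.exp (-(r * (C₃ * h))) + c₂ * h^2 := by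
    refine le_trans hGreen ?_
    have hmul : Real.exp (-(r * (C₃ * h))) * (c₂ * h^2) ≤ c₂ * h^2 :=
      mul_le_of_le_one_left hch2 hexpneg
    calc Real.exp (-(r * (C₃ * h))) * (1 + c₂ * h^2)
        = Real.exp (-(r * (C₃ * h))) + Real.exp (-(r * (C₃ * h))) * (c₂ * h^2) := by ring
      _ ≤ Real.exp (-(r * (C₃ * h))) + c₂ * h^2 := add_le_add_right hmul _
  have hone : quadSum Δx Δy N J n j (mertonGreen r lam σx σy ρ κx κy CM μ Δτ) ≤ 1 := by
    refine le_trans hGreen ?_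
    have hexp1 : 1 + c₂ * h^2 ≤ Real.exp (r * (C₃ * h)) := by
      have h2 := Real.add_one_le_exp (r * (C₃ * h))
      have h3 : c₂ * h * h ≤ r * C₃ * h := mul_le_mul_of_nonneg_right hhc₂ hh.le
      have h4 : c₂ * h * h = c₂ * h^2 := by ring
      have h5 : r * C₃ * h = r * (C₃ * h) := by ring
      linarith only [h2, h3, h4, h5]
    calc Real.exp (-(r * (C₃ * h))) * (1 + c₂ * h^2)
        ≤ Real.exp (-(r * (C₃ * h))) * Real.exp (r * (C₃ * h)) :=
          mul_le_mul_of_nonneg_left hexp1 (Real.exp_pos _).le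
      _ = 1 := by rw [← Real.exp_add]; simp
  have hPartialLe : ∀ K : ℕ,
      quadSum Δx Δy N J n j (mertonGreenPartial r lam σx σy ρ κx κy CM μ Δτ K)
        ≤ quadSum Δx Δy N J n j (mertonGreen r lam σx σy ρ κx κy CM μ Δτ) := fun K => by
    unfold quadSum
    apply mul_le_mul_of_nonneg_left _ (by positivity : (0:ℝ) ≤ Δx * Δy)
    refine Finset.sum_le_sum fun l _ => Finset.sum_le_sum fun d _ => ?_
    apply mul_le_mul_of_nonneg_left _
      (mul_nonneg (trapWeight_nonneg N l) (trapWeight_nonneg J d))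
    unfold mertonGreenPartial mertonGreen
    rw [← hCm_def, ← hβ_def, ← hθ_def]
    exact Summable.sum_le_tsum _ (fun k _ => mertonTerm_nonneg lam Δτ hlam hΔτ.le Cm CM β μ _ θ k)
      (hsummable _)
  have honeK : ∀ K : ℕ,
      quadSum Δx Δy N J n j (mertonGreenPartial r lam σx σy ρ κx κy CM μ Δτ K) ≤ 1 :=
    fun K => le_trans (hPartialLe K) hone
  have hgoal1K : ∀ K : ℕ,
      quadSum Δx Δy N J n j (mertonGreenPartial r lam σx σy ρ κx κy CM μ Δτ K)
        ≤ Real.exp (-(r * (C₃ * h))) + c₂ * h^2 :=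
    fun K => le_trans (hPartialLe K) hgoal1
  have hTbound : ∀ T : ℝ, 0 < T → (1:ℝ) ≤ 1 + c₂ * h * (C₃ * h / T) := fun T hT => by
    have h0 : (0:ℝ) ≤ c₂ * h * (C₃ * h / T) := by positivity
    linarith only [h0]
  have hTexp : ∀ T : ℝ, 0 < T → (1:ℝ) ≤ Real.exp (c₂ * h * (C₃ * h / T)) := fun T hT => by
    have h1 : (0:ℝ) ≤ c₂ * h * (C₃ * h / T) := by positivity
    have h2 := Real.add_one_le_exp (c₂ * h * (C₃ * h / T))
    linarith only [h1, h2]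
  exact ⟨hgoal1, fun T hT => ⟨le_trans hone (hTbound T hT), le_trans hone (hTexp T hT)⟩,
    fun K => ⟨hgoal1K K, fun T hT =>
      ⟨le_trans (honeK K) (hTbound T hT), le_trans (honeK K) (hTexp T hT)⟩⟩⟩

end
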